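/- Let k, l ≥ 1 with k + l ≤ m. Then every A ∈ U_{k+l} can be written as A = A₁ + A₂ with A₁ ∈ U_k and A₂ ∈ U_l (i.e., U_{k+l} ⊆ U_k + U_l). Moreover the inclusion is strict: there exist A₁ ∈ U_k and A₂ ∈ U_l with A₁ + A₂ ∉ U_{k+l}. -/

import Mathlib

/-- A (row-)stochastic matrix. -/
def IsStochastic (m : ℕ) (T : Matrix (Fin m) (Fin m) ℝ) : Prop :=
  (∀ i j, 0 ≤ T i j) ∧ ∀ i, ∑ j, T i j = 1

/-- `T_k`: matrices with entries in `[0,1]` and all row sums equal to `k`. -/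
def Tset (m k : ℕ) : Set (Matrix (Fin m) (Fin m) ℝ) :=
  {T | (∀ i j, 0 ≤ T i j ∧ T i j ≤ 1) ∧ ∀ i, ∑ j, T i j = (k : ℝ)}

/-- `U_k`: the symmetrization of `T_k`. -/
def Uset (m k : ℕ) : Set (Matrix (Fin m) (Fin m) ℝ) :=
  {A | ∃ T ∈ Tset m k, A = (1 / 2 : ℝ) • (T + T.transpose)}

/-- The all-ones matrix `E`. -/
def Ematrix (m : ℕ) : Matrix (Fin m) (Fin m) ℝ := Matrix.of fun _ _ => 1

/-! The inclusion `U_{k+l} ⊆ U_k + U_l` comes from splitting `A ∈ U_{k+l}` as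
`(k/(k+l)) A + (l/(k+l)) A`, since scaling `T_n` by `c ∈ [0,1]` lands in `T_{cn}`.
It is strict because diagonal entries of matrices in any `U_n` are at most `1`, while
`U_k` and `U_l` both contain matrices with a diagonal entry equal to `1`. -/

variable {m n k : ℕ}

lemma smul_mem_Tset {T : Matrix (Fin m) (Fin m) ℝ} (hT : T ∈ Tset m n) {c : ℝ}
    (hc₀ : 0 ≤ c) (hc₁ : c ≤ 1) (hcn : c * n = k) : c • T ∈ Tset m k := by
  obtain ⟨hT01, hTsum⟩ := hT
  refine ⟨fun i j => ⟨mul_nonneg hc₀ (hT01 i j).1, ?_⟩, fun i => ?_⟩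
  · exact mul_le_one₀ hc₁ (hT01 i j).1 (hT01 i j).2
  · simp only [Matrix.smul_apply, smul_eq_mul, ← Finset.mul_sum, hTsum i, hcn]

lemma smul_mem_Uset {A : Matrix (Fin m) (Fin m) ℝ} (hA : A ∈ Uset m n) {c : ℝ}
    (hc₀ : 0 ≤ c) (hc₁ : c ≤ 1) (hcn : c * n = k) : c • A ∈ Uset m k := by
  obtain ⟨T, hT, rfl⟩ := hA
  refine ⟨c • T, smul_mem_Tset hT hc₀ hc₁ hcn, ?_⟩
  rw [Matrix.transpose_smul, ← smul_add, smul_comm]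

lemma div_smul_mem_Uset {A : Matrix (Fin m) (Fin m) ℝ} (hA : A ∈ Uset m n) (hkn : k ≤ n) :
    ((k : ℝ) / n) • A ∈ Uset m k :=
  smul_mem_Uset hA (by positivity) (div_le_one_of_le₀ (by exact_mod_cast hkn) (by positivity))
    (div_mul_cancel_of_imp fun hn => by
      rw [Nat.cast_eq_zero] at hn ⊢; omega)

lemma Uset.apply_self_le_one {A : Matrix (Fin m) (Fin m) ℝ} (hA : A ∈ Uset m n) (i : Fin m) :
    A i i ≤ 1 := by
  obtain ⟨T, ⟨hT01, -⟩, rfl⟩ := hA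
  simp only [Matrix.smul_apply, Matrix.add_apply, Matrix.transpose_apply, smul_eq_mul]
  linarith [(hT01 i i).2]

lemma of_indicator_mem_Tset (S : Finset (Fin m)) :
    Matrix.of (fun _ j => if j ∈ S then (1 : ℝ) else 0) ∈ Tset m S.card := by
  refine ⟨fun i j => ?_, fun i => ?_⟩
  · by_cases h : j ∈ S <;> simp [h]
  · simp

lemma exists_mem_Uset_apply_self_eq_one (hk : 1 ≤ k) (hkm : k ≤ m) (i : Fin m) :
    ∃ A ∈ Uset m k, A i i = 1 := by
  obtain ⟨S, hiS, -, hS⟩ := Finset.exists_subsuperset_card_eq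
    (Finset.subset_univ {i}) (by simpa using hk) (by simpa using hkm)
  refine ⟨_, ⟨_, hS ▸ of_indicator_mem_Tset S, rfl⟩, ?_⟩
  norm_num [Finset.singleton_subset_iff.mp hiS]

/-- `U_(k+l) ⊆ U_k + U_l`, and the inclusion is strict. -/
theorem Uk_add_Ul (m k l : ℕ) (hk : 1 ≤ k) (hl : 1 ≤ l) (hkl : k + l ≤ m) :
    (∀ A ∈ Uset m (k + l), ∃ A₁ ∈ Uset m k, ∃ A₂ ∈ Uset m l, A = A₁ + A₂) ∧
      (∃ A₁ ∈ Uset m k, ∃ A₂ ∈ Uset m l, A₁ + A₂ ∉ Uset m (k + l)) := by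
  constructor
  · intro A hA
    refine ⟨_, div_smul_mem_Uset hA (Nat.le_add_right k l),
      _, div_smul_mem_Uset hA (Nat.le_add_left l k), ?_⟩
    rw [← add_smul, ← add_div, ← Nat.cast_add, div_self (by positivity), one_smul]
  · let i : Fin m := ⟨0, by omega⟩
    obtain ⟨A₁, hA₁, hA₁i⟩ := exists_mem_Uset_apply_self_eq_one hk (by omega) i
    obtain ⟨A₂, hA₂, hA₂i⟩ := exists_mem_Uset_apply_self_eq_one hl (by omega) i
    refine ⟨A₁, hA₁, A₂, hA₂, fun hA => ?_⟩
    have := Uset.apply_self_le_one hA i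
    rw [Matrix.add_apply, hA₁i, hA₂i] at this
    norm_num at this
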